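/- Let W be the complex vector space of all functions f : Hom(F_q^n, U) → ℂ. For each n×n symmetric matrix A over F_q define ω(A) ∈ GL(W) by (ω(A)f)(S) = ψ((1/2)Tr(G_{β_S} A))·f(S), where G_{β_S} is the Gram matrix of β_S; then A ↦ ω(A) is a representation of the additive group of n×n symmetric matrices on W. Fix a surjective linear map T : F_q^n → U. Then the eigenspace {f ∈ W : ω(A)f = ψ((1/2)Tr(G_{β_T} A))·f for all symmetric A} is exactly the space of functions supported on the orbit O_T = {r ∘ T : r ∈ O_β}. -/

import Mathlib

open Matrix
open scoped Kronecker

/-- The subgroup of invertible matrices `g` preserving the bilinear form with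
matrix `M`, i.e. satisfying `gᵀ * M * g = M`. -/
def matIsom (F : Type) [Field F] (ι : Type) [Fintype ι] [DecidableEq ι]
    (M : Matrix ι ι F) : Subgroup (Matrix ι ι F)ˣ where
  carrier := {g | (g : Matrix ι ι F)ᵀ * M * g = M}
  one_mem' := by simp
  mul_mem' := by
    intro a b ha hb
    simp only [Set.mem_setOf_eq, Units.val_mul, transpose_mul] at *
    calc (b : Matrix ι ι F)ᵀ * (a : Matrix ι ι F)ᵀ * M * ((a : Matrix ι ι F) * b)
        = (b : Matrix ι ι F)ᵀ * ((a : Matrix ι ι F)ᵀ * M * a) * b := by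
          simp only [Matrix.mul_assoc]
      _ = M := by rw [ha, hb]
  inv_mem' := by
    intro a ha
    simp only [Set.mem_setOf_eq] at *
    set b : Matrix ι ι F := ↑a⁻¹ with hb
    have h1 : (a : Matrix ι ι F) * b = 1 := by
      rw [hb, ← Units.val_mul, mul_inv_cancel, Units.val_one]
    calc bᵀ * M * b = bᵀ * ((a : Matrix ι ι F)ᵀ * M * a) * b := by rw [ha]
      _ = ((a : Matrix ι ι F) * b)ᵀ * M * ((a : Matrix ι ι F) * b) := by
          simp only [transpose_mul, Matrix.mul_assoc]
      _ = M := by rw [h1]; simp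

/-- The matrix of the standard symplectic form on `F^(2n)`. -/
def Jmat (F : Type) [Field F] (n : ℕ) : Matrix (Fin n ⊕ Fin n) (Fin n ⊕ Fin n) F :=
  fromBlocks 0 1 (-1) 0

/-- The symplectic group `Sp_{2n}(F)`: matrices with `gᵀ J g = J`. -/
abbrev Sp (F : Type) [Field F] (n : ℕ) : Subgroup (Matrix (Fin n ⊕ Fin n) (Fin n ⊕ Fin n) F)ˣ :=
  matIsom F (Fin n ⊕ Fin n) (Jmat F n)

/-- The invertible matrix `[[1, A], [0, 1]]`. -/
def shearUnit (F : Type) [Field F] (n : ℕ) (A : Matrix (Fin n) (Fin n) F) :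
    (Matrix (Fin n ⊕ Fin n) (Fin n ⊕ Fin n) F)ˣ where
  val := fromBlocks 1 A 0 1
  inv := fromBlocks 1 (-A) 0 1
  val_inv := by
    rw [fromBlocks_multiply, ← fromBlocks_one (l := Fin n) (m := Fin n)]
    simp
  inv_val := by
    rw [fromBlocks_multiply, ← fromBlocks_one (l := Fin n) (m := Fin n)]
    simp

lemma shearUnit_mem (F : Type) [Field F] (n : ℕ) (A : Matrix (Fin n) (Fin n) F)
    (hA : A.IsSymm) : shearUnit F n A ∈ Sp F n := by
  show (fromBlocks 1 A 0 1 : Matrix (Fin n ⊕ Fin n) (Fin n ⊕ Fin n) F)ᵀ * Jmat F n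
      * fromBlocks 1 A 0 1 = Jmat F n
  have := hA.eq
  simp [Jmat, fromBlocks_transpose, fromBlocks_multiply, this]

/-- The element `n_A = [[1, A], [0, 1]]` of the Siegel unipotent radical of `Sp_{2n}(F)`,
for a symmetric matrix `A`. -/
def nUnip (F : Type) [Field F] (n : ℕ) (A : Matrix (Fin n) (Fin n) F) (hA : A.IsSymm) :
    ↥(Sp F n) :=
  ⟨shearUnit F n A, shearUnit_mem F n A hA⟩

/-- A representation is irreducible if the space is nonzero and the only invariant
subspaces are `⊥` and `⊤`. -/
def IsIrredRep {G : Type} [Monoid G] {W : Type} [AddCommGroup W] [Module ℂ W]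
    (ρ : Representation ℂ G W) : Prop :=
  Nontrivial W ∧ ∀ p : Submodule ℂ W, (∀ g : G, ∀ w ∈ p, ρ g w ∈ p) → p = ⊥ ∨ p = ⊤

/-- Isomorphism of representations. -/
def RepIso {G : Type} [Monoid G] {W₁ W₂ : Type} [AddCommGroup W₁] [Module ℂ W₁]
    [AddCommGroup W₂] [Module ℂ W₂]
    (ρ₁ : Representation ℂ G W₁) (ρ₂ : Representation ℂ G W₂) : Prop :=
  ∃ e : W₁ ≃ₗ[ℂ] W₂, ∀ (g : G) (w : W₁), e (ρ₁ g w) = ρ₂ g (e w)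

/-- The multiplicity `m_B(ρ)` of the character `ψ_B : n_A ↦ ψ(Tr(B * A))` of the Siegel
unipotent radical `N` in the restriction of `ρ` to `N`. -/
noncomputable def multB {F : Type} [Field F] {n : ℕ} {W : Type} [AddCommGroup W] [Module ℂ W]
    (ρ : Representation ℂ (↥(Sp F n)) W) (ψ : AddChar F ℂ) (B : Matrix (Fin n) (Fin n) F) : ℕ :=
  Module.finrank ℂ
    ↥(⨅ A : {A : Matrix (Fin n) (Fin n) F // A.IsSymm},
      Module.End.eigenspace (ρ (nUnip F n A.1 A.2)) (ψ (Matrix.trace (B * A.1))))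

/-- Congruence of matrices: `B'` is obtained from `B` by the change-of-basis action of
an invertible matrix. -/
def MatCongruent {F : Type} [Field F] {n : ℕ} (B B' : Matrix (Fin n) (Fin n) F) : Prop :=
  ∃ C : (Matrix (Fin n) (Fin n) F)ˣ, B' = (C : Matrix (Fin n) (Fin n) F)ᵀ * B * C

/-- A bundled complex representation of `G` (on an arbitrary complex vector space). -/
structure CRep (G : Type) [Monoid G] : Type 1 where
  carrier : Type
  [acg : AddCommGroup carrier]
  [mod : Module ℂ carrier]
  ρ : Representation ℂ G carrier

attribute [instance] CRep.acg CRep.mod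

lemma negI_mem (F : Type) [Field F] (n : ℕ) :
    (-1 : (Matrix (Fin n ⊕ Fin n) (Fin n ⊕ Fin n) F)ˣ) ∈ Sp F n := by
  show ((-1 : (Matrix (Fin n ⊕ Fin n) (Fin n ⊕ Fin n) F)ˣ) : Matrix _ _ F)ᵀ * Jmat F n
      * ((-1 : (Matrix (Fin n ⊕ Fin n) (Fin n ⊕ Fin n) F)ˣ) : Matrix _ _ F) = Jmat F n
  simp

/-- The element `-I` of `Sp_{2n}(F)`. -/
def negI (F : Type) [Field F] (n : ℕ) : ↥(Sp F n) := ⟨-1, negI_mem F n⟩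

/-- A submodule is invariant under a representation. -/
def InvariantUnder {G : Type} [Monoid G] {W : Type} [AddCommGroup W] [Module ℂ W]
    (ρ : Representation ℂ G W) (p : Submodule ℂ W) : Prop :=
  ∀ g : G, ∀ w ∈ p, ρ g w ∈ p

/-- `p` is an invariant subspace on which `ρ` restricts to an irreducible
subrepresentation. -/
def IsIrreducibleSubrep {G : Type} [Monoid G] {W : Type} [AddCommGroup W] [Module ℂ W]
    (ρ : Representation ℂ G W) (p : Submodule ℂ W) : Prop :=
  InvariantUnder ρ p ∧ p ≠ ⊥ ∧
    ∀ s : Submodule ℂ W, s ≤ p → InvariantUnder ρ s → s = ⊥ ∨ s = p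

/-- Isomorphism of the subrepresentations carried by invariant subspaces `p`, `p'` of
representations `ρ`, `ρ'`. -/
def SubRepIso {G : Type} [Monoid G] {W W' : Type} [AddCommGroup W] [Module ℂ W]
    [AddCommGroup W'] [Module ℂ W']
    (ρ : Representation ℂ G W) (ρ' : Representation ℂ G W')
    (p : Submodule ℂ W) (p' : Submodule ℂ W') : Prop :=
  ∃ e : ↥p ≃ₗ[ℂ] ↥p', ∀ (g : G) (w w₂ : ↥p), ρ g ↑w = (w₂ : W) →
    ρ' g ↑(e w) = ((e w₂ : ↥p') : W')

/-- The multiplicity of the character `n_A ↦ ψ((1/2) Tr(B * A))` of the Siegel unipotent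
radical in the subrepresentation carried by the invariant subspace `p`. -/
noncomputable def multBOn {F : Type} [Field F] {n : ℕ} {W : Type} [AddCommGroup W] [Module ℂ W]
    (ρ : Representation ℂ (↥(Sp F n)) W) (ψ : AddChar F ℂ) (B : Matrix (Fin n) (Fin n) F)
    (p : Submodule ℂ W) : ℕ :=
  Module.finrank ℂ
    ↥(p ⊓ ⨅ A : {A : Matrix (Fin n) (Fin n) F // A.IsSymm},
      Module.End.eigenspace (ρ (nUnip F n A.1 A.2)) (ψ ((2 : F)⁻¹ * Matrix.trace (B * A.1))))

/-- The multiplicity `m'_B(ρ)` of the character `n_A ↦ ψ((1/2) Tr(B * A))` of the Siegel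
unipotent radical `N` in the restriction of `ρ` to `N`. -/
noncomputable def multB' {F : Type} [Field F] {n : ℕ} {W : Type} [AddCommGroup W] [Module ℂ W]
    (ρ : Representation ℂ (↥(Sp F n)) W) (ψ : AddChar F ℂ) (B : Matrix (Fin n) (Fin n) F) : ℕ :=
  Module.finrank ℂ
    ↥(⨅ A : {A : Matrix (Fin n) (Fin n) F // A.IsSymm},
      Module.End.eigenspace (ρ (nUnip F n A.1 A.2)) (ψ ((2 : F)⁻¹ * Matrix.trace (B * A.1))))

/-- The symmetric bilinear form `β_T(x, x') = β(Tx, Tx')` on `F^n`, where `β` is the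
bilinear form on `F^k` with Gram matrix `G`. -/
def betaT {F : Type} [Field F] {k n : ℕ} (G : Matrix (Fin k) (Fin k) F)
    (T : Matrix (Fin k) (Fin n) F) : (Fin n → F) → (Fin n → F) → F :=
  fun x x' => (T *ᵥ x) ⬝ᵥ (G *ᵥ (T *ᵥ x'))

/-- The subgroup of invertible matrices preserving a bilinear form `Φ` on `ι → F`. -/
def formStab (F : Type) [Field F] (ι : Type) [Fintype ι] [DecidableEq ι]
    (Φ : (ι → F) → (ι → F) → F) : Subgroup (Matrix ι ι F)ˣ where
  carrier := {g | ∀ x y : ι → F, Φ ((g : Matrix ι ι F) *ᵥ x) ((g : Matrix ι ι F) *ᵥ y) = Φ x y}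
  one_mem' := by intro x y; simp
  mul_mem' := by
    intro a b ha hb x y
    simp only [Units.val_mul, ← Matrix.mulVec_mulVec]
    rw [ha, hb]
  inv_mem' := by
    intro a ha x y
    have h : ∀ v : ι → F, (a : Matrix ι ι F) *ᵥ (((a⁻¹ : (Matrix ι ι F)ˣ) : Matrix ι ι F) *ᵥ v) = v := by
      intro v
      rw [Matrix.mulVec_mulVec, ← Units.val_mul, mul_inv_cancel, Units.val_one, Matrix.one_mulVec]
    calc Φ ((a⁻¹ : (Matrix ι ι F)ˣ) *ᵥ x) ((a⁻¹ : (Matrix ι ι F)ˣ) *ᵥ y)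
        = Φ ((a : Matrix ι ι F) *ᵥ ((a⁻¹ : (Matrix ι ι F)ˣ) *ᵥ x))
            ((a : Matrix ι ι F) *ᵥ ((a⁻¹ : (Matrix ι ι F)ˣ) *ᵥ y)) := (ha _ _).symm
      _ = Φ x y := by rw [h, h]

/-- The `n × n` matrix `diag(G, 0)` obtained by placing `G` in the upper-left `k × k`
corner and zeros elsewhere. -/
def diagEmbed {F : Type} [Field F] {k n : ℕ} (G : Matrix (Fin k) (Fin k) F) (h : k ≤ n) :
    Matrix (Fin n) (Fin n) F :=
  Matrix.reindex (finSumFinEquiv.trans (finCongr (Nat.add_sub_cancel' h)))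
    (finSumFinEquiv.trans (finCongr (Nat.add_sub_cancel' h)))
    (fromBlocks G 0 0 (0 : Matrix (Fin (n - k)) (Fin (n - k)) F))


/-- The operator `ω(A)` on functions `Hom(F^n, U) → ℂ`,
`(ω(A) f)(S) = ψ((1/2) Tr(G_{β_S} A)) f(S)`. -/
def oscN (F : Type) [Field F] (k n : ℕ) (ψ : AddChar F ℂ)
    (G : Matrix (Fin k) (Fin k) F) (A : Matrix (Fin n) (Fin n) F) :
    (Matrix (Fin k) (Fin n) F → ℂ) →ₗ[ℂ] (Matrix (Fin k) (Fin n) F → ℂ) where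
  toFun f := fun S => ψ ((2 : F)⁻¹ * Matrix.trace ((Sᵀ * G * S) * A)) * f S
  map_add' f g := by
    funext S
    simp [mul_add]
  map_smul' c f := by
    funext S
    simp only [Pi.smul_apply, smul_eq_mul, RingHom.id_apply]
    ring

/-!
Each `ω(A)` multiplies `f` pointwise by `S ↦ ψ(½ Tr(G_{β_S} A))`, so `f` is a
`ψ_{β_T}`-eigenvector iff at every `S` in its support these characters of `A` agree with those
of `T`. For odd `q` and nontrivial `ψ` the pairing `(B, A) ↦ ψ(½ Tr(B A))` on symmetric
matrices is nondegenerate, so this says `G_{β_S} = G_{β_T}`, i.e. `Sᵀ G S = Tᵀ G T`.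
Finally, if `T T' = 1` then `r = S T'` satisfies `rᵀ G r = G`, hence is invertible, and
`S = r T`.
-/

namespace Matrix

variable {F : Type} [Field F] {m n : Type} [Fintype m]

theorem IsSymm.transpose_mul_mul {G : Matrix m m F} (hG : G.IsSymm) (S : Matrix m n F) :
    (Sᵀ * G * S).IsSymm := by
  simp only [IsSymm, transpose_mul, transpose_transpose, hG.eq, Matrix.mul_assoc]

theorem IsSymm.eq_of_forall_addChar_trace_mul_eq {M : Type} [CommMonoid M] [DecidableEq m]
    (h2 : (2 : F) ≠ 0) {ψ : AddChar F M} (hψ : ψ ≠ 1) {B B' : Matrix m m F}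
    (hB : B.IsSymm) (hB' : B'.IsSymm)
    (h : ∀ A : Matrix m m F, A.IsSymm →
      ψ ((2 : F)⁻¹ * trace (B * A)) = ψ ((2 : F)⁻¹ * trace (B' * A))) :
    B = B' := by
  have trace_mul_single_add_single : ∀ {C : Matrix m m F}, C.IsSymm → ∀ i j c,
      (2 : F)⁻¹ * trace (C * (single i j c + single j i c)) = C i j * c := by
    intro C hC i j c
    rw [Matrix.mul_add, trace_add, trace_mul_single, trace_mul_single, hC.apply j i]
    simp only [MulOpposite.smul_eq_mul_unop, MulOpposite.unop_op]
    field_simp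
    ring
  ext i j
  refine AddChar.to_mulShift_inj_of_isPrimitive (AddChar.IsPrimitive.of_ne_one hψ)
    (DFunLike.ext _ _ fun c => ?_)
  have hA : (single i j c + single j i c).IsSymm := by
    simp [IsSymm, add_comm]
  simpa only [AddChar.mulShift_apply, trace_mul_single_add_single hB,
    trace_mul_single_add_single hB'] using h _ hA

theorem exists_mul_eq_one_of_surjective_mulVecLin [Fintype n] [DecidableEq m] [DecidableEq n]
    {T : Matrix m n F} (hT : Function.Surjective T.mulVecLin) :
    ∃ T' : Matrix n m F, T * T' = 1 := by
  obtain ⟨g, hg⟩ := T.mulVecLin.exists_rightInverse_of_surjective (LinearMap.range_eq_top.mpr hT)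
  refine ⟨LinearMap.toMatrix' g, ?_⟩
  rw [← LinearMap.toMatrix'_toLin' T, ← LinearMap.toMatrix'_comp, toLin'_apply', hg,
    LinearMap.toMatrix'_id]

theorem exists_unit_transpose_mul_mul_eq_and_eq_mul {R : Type} [CommRing R] [Fintype n]
    [DecidableEq m] {G : Matrix m m R} (hG : IsUnit G) {S T : Matrix m n R} {T' : Matrix n m R}
    (hT : T * T' = 1) (h : Sᵀ * G * S = Tᵀ * G * T) :
    ∃ r : (Matrix m m R)ˣ, (r : Matrix m m R)ᵀ * G * r = G ∧ S = (r : Matrix m m R) * T := by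
  set r := S * T'
  have hr : rᵀ * G * r = G := calc
    rᵀ * G * r = T'ᵀ * (Sᵀ * G * S) * T' := by simp only [r, transpose_mul, Matrix.mul_assoc]
    _ = (T * T')ᵀ * G * (T * T') := by rw [h]; simp only [transpose_mul, Matrix.mul_assoc]
    _ = G := by rw [hT, transpose_one, Matrix.one_mul, Matrix.mul_one]
  have hrS : rᵀ * G * S = G * T := calc
    rᵀ * G * S = T'ᵀ * (Sᵀ * G * S) := by simp only [r, transpose_mul, Matrix.mul_assoc]
    _ = (T * T')ᵀ * G * T := by rw [h]; simp only [transpose_mul, Matrix.mul_assoc]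
    _ = G * T := by rw [hT, transpose_one, Matrix.one_mul]
  obtain ⟨u, hu⟩ := hG
  have hr_unit : IsUnit r := IsUnit.of_mul_eq_one_right ((↑u⁻¹ : Matrix m m R) * rᵀ * G) <| by
    rw [Matrix.mul_assoc, Matrix.mul_assoc, ← Matrix.mul_assoc rᵀ, hr, ← hu, Units.inv_mul]
  have hrG_unit : IsUnit (rᵀ * G) := ((isUnit_transpose r).mpr hr_unit).mul ⟨u, hu⟩
  obtain ⟨_⟩ := hrG_unit.nonempty_invertible
  refine ⟨hr_unit.unit, hr, (mul_right_inj_of_invertible (rᵀ * G)).mp ?_⟩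
  rw [hr_unit.unit_spec, hrS, ← Matrix.mul_assoc, hr]

variable [DecidableEq m]

theorem mem_formStab_dotProduct_mulVec_iff {G : Matrix m m F} {r : (Matrix m m F)ˣ} :
    r ∈ formStab F m (fun u v => u ⬝ᵥ (G *ᵥ v)) ↔ (r : Matrix m m F)ᵀ * G * r = G := by
  rw [← (toLinearMap₂' F : Matrix m m F ≃ₗ[F] (m → F) →ₗ[F] (m → F) →ₗ[F] F).injective.eq_iff,
    ← toLinearMap₂'_comp, LinearMap.ext_iff₂]
  simp only [LinearMap.compl₁₂_apply, toLin'_apply, toLinearMap₂'_apply']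
  rfl

theorem exists_formStab_eq_mul_iff [Fintype n] {G : Matrix m m F} (hG : IsUnit G)
    {S T : Matrix m n F} {T' : Matrix n m F} (hT : T * T' = 1) :
    (∃ r : formStab F m (fun u v => u ⬝ᵥ (G *ᵥ v)),
        S = ((r : (Matrix m m F)ˣ) : Matrix m m F) * T) ↔
      Sᵀ * G * S = Tᵀ * G * T := by
  constructor
  · rintro ⟨r, rfl⟩
    rw [transpose_mul, ← Matrix.mul_assoc, Matrix.mul_assoc Tᵀ, Matrix.mul_assoc Tᵀ,
      mem_formStab_dotProduct_mulVec_iff.mp r.2]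
  · intro h
    obtain ⟨r, hr, rfl⟩ := exists_unit_transpose_mul_mul_eq_and_eq_mul hG hT h
    exact ⟨⟨r, mem_formStab_dotProduct_mulVec_iff.mpr hr⟩, rfl⟩

end Matrix

section oscN

variable {F : Type} [Field F] {k n : ℕ} {ψ : AddChar F ℂ} {G : Matrix (Fin k) (Fin k) F}

theorem oscN_apply (A : Matrix (Fin n) (Fin n) F) (f : Matrix (Fin k) (Fin n) F → ℂ)
    (S : Matrix (Fin k) (Fin n) F) :
    oscN F k n ψ G A f S = ψ ((2 : F)⁻¹ * trace ((Sᵀ * G * S) * A)) * f S := rfl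

theorem oscN_add (A A' : Matrix (Fin n) (Fin n) F) :
    oscN F k n ψ G (A + A') = oscN F k n ψ G A * oscN F k n ψ G A' := by
  ext f S
  simp only [Module.End.mul_apply, oscN_apply, trace_add, mul_add, AddChar.map_add_eq_mul]
  ring

theorem oscN_zero : oscN F k n ψ G 0 = 1 := by
  ext f S
  simp [oscN_apply]

variable (F k n ψ G) in
def oscNRep : Representation ℂ (Multiplicative (Matrix (Fin n) (Fin n) F))
    (Matrix (Fin k) (Fin n) F → ℂ) where
  toFun A := oscN F k n ψ G A.toAdd
  map_one' := oscN_zero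
  map_mul' := oscN_add

theorem isUnit_oscN (A : Matrix (Fin n) (Fin n) F) : IsUnit (oscN F k n ψ G A) :=
  (Group.isUnit (Multiplicative.ofAdd A)).map (oscNRep F k n ψ G)

theorem forall_oscN_eq_smul_iff (B : Matrix (Fin n) (Fin n) F)
    (f : Matrix (Fin k) (Fin n) F → ℂ) :
    (∀ A : Matrix (Fin n) (Fin n) F, A.IsSymm →
        oscN F k n ψ G A f = ψ ((2 : F)⁻¹ * trace (B * A)) • f) ↔
      ∀ S, f S ≠ 0 → ∀ A : Matrix (Fin n) (Fin n) F, A.IsSymm →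
        ψ ((2 : F)⁻¹ * trace ((Sᵀ * G * S) * A)) = ψ ((2 : F)⁻¹ * trace (B * A)) := by
  simp only [funext_iff, oscN_apply, Pi.smul_apply, smul_eq_mul]
  constructor
  · intro h S hS A hA
    exact mul_right_cancel₀ hS (h A hA S)
  · intro h A hA S
    by_cases hS : f S = 0
    · simp [hS]
    · rw [h S hS A hA]

end oscN

theorem oscN_eigenspace_eq_orbit_functions_general
    (F : Type) [Field F] [Fintype F] (hodd : Odd (Fintype.card F))
    (n k : ℕ)
    (ψ : AddChar F ℂ) (hψ : ψ ≠ 1)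
    (G : Matrix (Fin k) (Fin k) F) (hG : G.IsSymm) (hGnd : IsUnit G)
    (T : Matrix (Fin k) (Fin n) F) (hT : Function.Surjective T.mulVecLin) :
    (∀ A A' : Matrix (Fin n) (Fin n) F, A.IsSymm → A'.IsSymm →
      oscN F k n ψ G (A + A') = oscN F k n ψ G A * oscN F k n ψ G A') ∧
    (∀ A : Matrix (Fin n) (Fin n) F, A.IsSymm → IsUnit (oscN F k n ψ G A)) ∧
    {f : Matrix (Fin k) (Fin n) F → ℂ |
        ∀ A : Matrix (Fin n) (Fin n) F, A.IsSymm →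
          oscN F k n ψ G A f = ψ ((2 : F)⁻¹ * Matrix.trace ((Tᵀ * G * T) * A)) • f}
      = {f : Matrix (Fin k) (Fin n) F → ℂ |
        ∀ S : Matrix (Fin k) (Fin n) F, f S ≠ 0 →
          ∃ r : ↥(formStab F (Fin k) (fun u v => u ⬝ᵥ (G *ᵥ v))),
            S = ((r : (Matrix (Fin k) (Fin k) F)ˣ) : Matrix (Fin k) (Fin k) F) * T} := by
  have h2 : (2 : F) ≠ 0 := Ring.two_ne_zero fun hchar => by
    have := FiniteField.even_card_of_char_two hchar
    rw [Nat.odd_iff] at hodd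
    omega
  obtain ⟨T', hT'⟩ := exists_mul_eq_one_of_surjective_mulVecLin hT
  refine ⟨fun A A' _ _ => oscN_add A A', fun A _ => isUnit_oscN A, Set.ext fun f => ?_⟩
  simp only [Set.mem_ofPred_eq, forall_oscN_eq_smul_iff, exists_formStab_eq_mul_iff hGnd hT']
  refine forall₂_congr fun S _ => ⟨fun h => ?_, fun h _ _ => by rw [h]⟩
  exact (hG.transpose_mul_mul S).eq_of_forall_addChar_trace_mul_eq h2 hψ
    (hG.transpose_mul_mul T) h

/-- `A ↦ ω(A)` is a representation of the additive group of symmetric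
matrices by invertible operators, and for a surjective `T : F_q^n → U`, the
`ψ_{β_T}`-eigenspace of this action is exactly the space of functions supported on the
`O_β`-orbit of `T`. -/
theorem oscN_eigenspace_eq_orbit_functions
    (F : Type) [Field F] [Fintype F] [DecidableEq F] (hodd : Odd (Fintype.card F))
    (n k : ℕ)
    (ψ : AddChar F ℂ) (hψ : ψ ≠ 1)
    (G : Matrix (Fin k) (Fin k) F) (hG : G.IsSymm) (hGnd : IsUnit G)
    (T : Matrix (Fin k) (Fin n) F) (hT : Function.Surjective T.mulVecLin) :
    (∀ A A' : Matrix (Fin n) (Fin n) F, A.IsSymm → A'.IsSymm →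
      oscN F k n ψ G (A + A') = oscN F k n ψ G A * oscN F k n ψ G A') ∧
    (∀ A : Matrix (Fin n) (Fin n) F, A.IsSymm → IsUnit (oscN F k n ψ G A)) ∧
    {f : Matrix (Fin k) (Fin n) F → ℂ |
        ∀ A : Matrix (Fin n) (Fin n) F, A.IsSymm →
          oscN F k n ψ G A f = ψ ((2 : F)⁻¹ * Matrix.trace ((Tᵀ * G * T) * A)) • f}
      = {f : Matrix (Fin k) (Fin n) F → ℂ |
        ∀ S : Matrix (Fin k) (Fin n) F, f S ≠ 0 →
          ∃ r : ↥(formStab F (Fin k) (fun u v => u ⬝ᵥ (G *ᵥ v))),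
            S = ((r : (Matrix (Fin k) (Fin k) F)ˣ) : Matrix (Fin k) (Fin k) F) * T} :=
  oscN_eigenspace_eq_orbit_functions_general F hodd n k ψ hψ G hG hGnd T hT
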